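/- arXiv:1006.5236 — 2 statements merged into one kernel-verified Lean document; each statement's English description precedes it below -/
import Mathlib

section
/- If (A,*) is a weakly euclidean ring with involution, then the group SL_*(2,A) is generated by the set of Bruhat generators {u(s) : s ∈ A_s} ∪ {h(a) : a ∈ A^×} ∪ {w}. -/
/-- The set `SL_*(2,A)` for a ring with involution `(A, *)`. -/
def SLstarSet (A : Type*) [Ring A] [StarRing A] : Set (Matrix (Fin 2) (Fin 2) A) :=
  {g | g 0 0 * star (g 0 1) = g 0 1 * star (g 0 0) ∧
       g 1 0 * star (g 1 1) = g 1 1 * star (g 1 0) ∧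
       star (g 0 0) * g 1 0 = star (g 1 0) * g 0 0 ∧
       star (g 0 1) * g 1 1 = star (g 1 1) * g 0 1 ∧
       g 0 0 * star (g 1 1) - g 0 1 * star (g 1 0) = 1 ∧
       star (g 0 0) * g 1 1 - star (g 1 0) * g 0 1 = 1}

/-- The Bruhat generator `h(a) = [[a, 0],[0, (a*)⁻¹]]`, `a ∈ A^×`. -/
def hMat {A : Type*} [Ring A] [StarRing A] (a : Aˣ) : Matrix (Fin 2) (Fin 2) A :=
  !![(a : A), 0; 0, ((star a)⁻¹ : Aˣ)]

/-- The Bruhat generator `u(s) = [[1, s],[0, 1]]`, `s ∈ A_s`. -/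
def uMat {A : Type*} [Ring A] [StarRing A] (s : A) : Matrix (Fin 2) (Fin 2) A :=
  !![1, s; 0, 1]

/-- The Bruhat generator `w = [[0, 1],[−1, 0]]`. -/
def wMat (A : Type*) [Ring A] [StarRing A] : Matrix (Fin 2) (Fin 2) A :=
  !![0, 1; -1, 0]

/-- `(A,*)` is weakly euclidean: any two `*`-commuting coprime elements `a, b` admit
a euclidean chain `a = s₀b + r₁`, `b = s₁r₁ + r₂`, ..., `r_{n−2} = s_{n−1}r_{n−1} + r_n`
with the `sᵢ` symmetric and `r_n` a unit. (Below, `r 0 = a`, `r 1 = b`, and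
`r (i+1)` plays the role of the paper's `r_i`.) -/
def WeaklyEuclidean (A : Type*) [Ring A] [StarRing A] : Prop :=
  ∀ a b : A, star a * b = star b * a → (∃ x y : A, x * a + y * b = 1) →
    ∃ n : ℕ, 0 < n ∧ ∃ s r : ℕ → A, r 0 = a ∧ r 1 = b ∧
      (∀ i < n, star (s i) = s i ∧ r i = s i * r (i + 1) + r (i + 2)) ∧
      IsUnit (r (n + 1))

section BruhatAux

variable {A : Type*} [Ring A] [StarRing A]

/-- The set of Bruhat generators. -/
def bruhatSet (A : Type*) [Ring A] [StarRing A] : Set (Matrix (Fin 2) (Fin 2) A) :=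
  {m | ∃ s : A, star s = s ∧ m = uMat s} ∪ {m | ∃ a : Aˣ, m = hMat a} ∪ {wMat A}

lemma u_mem_closure {s : A} (hs : star s = s) :
    uMat s ∈ Submonoid.closure (bruhatSet A) :=
  Submonoid.subset_closure (Or.inl (Or.inl ⟨s, hs, rfl⟩))

lemma h_mem_closure (a : Aˣ) : hMat a ∈ Submonoid.closure (bruhatSet A) :=
  Submonoid.subset_closure (Or.inl (Or.inr ⟨a, rfl⟩))

lemma w_mem_closure : wMat A ∈ Submonoid.closure (bruhatSet A) :=
  Submonoid.subset_closure (Or.inr rfl)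

lemma uMat_mul_apply (s : A) (g : Matrix (Fin 2) (Fin 2) A) :
    (uMat s * g) 0 0 = g 0 0 + s * g 1 0 ∧ (uMat s * g) 0 1 = g 0 1 + s * g 1 1 ∧
    (uMat s * g) 1 0 = g 1 0 ∧ (uMat s * g) 1 1 = g 1 1 := by
  refine ⟨?_, ?_, ?_, ?_⟩ <;> simp [uMat, Matrix.mul_apply, Fin.sum_univ_two]

lemma wMat_mul_apply (g : Matrix (Fin 2) (Fin 2) A) :
    (wMat A * g) 0 0 = g 1 0 ∧ (wMat A * g) 0 1 = g 1 1 ∧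
    (wMat A * g) 1 0 = -g 0 0 ∧ (wMat A * g) 1 1 = -g 0 1 := by
  refine ⟨?_, ?_, ?_, ?_⟩ <;> simp [wMat, Matrix.mul_apply, Fin.sum_univ_two]

lemma slstar_u {s : A} (hs : star s = s) {g : Matrix (Fin 2) (Fin 2) A}
    (hg : g ∈ SLstarSet A) : uMat s * g ∈ SLstarSet A := by
  obtain ⟨h1, h2, h3, h4, h5, h6⟩ := hg
  set a := g 0 0 with ha; set b := g 0 1 with hb
  set c := g 1 0 with hc; set d := g 1 1 with hd
  have h5' : d * star a - c * star b = 1 := by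
    have := congrArg star h5
    simpa [star_sub, star_mul] using this
  have e1 : a * star d = 1 + b * star c := by rw [← h5]; abel
  have e2 : c * star b = d * star a - 1 := by rw [← h5']; abel
  obtain ⟨m00, m01, m10, m11⟩ := uMat_mul_apply s g
  refine ⟨?_, ?_, ?_, ?_, ?_, ?_⟩ <;>
    simp only [m00, m01, m10, m11, star_add, star_mul, hs, ← ha, ← hb, ← hc, ← hd]
  · calc (a + s * c) * (star b + star d * s)
        = a * star b + (a * star d) * s + s * (c * star b) + s * (c * star d) * s := by
          noncomm_ring
      _ = b * star a + (1 + b * star c) * s + s * (d * star a - 1) + s * (d * star c) * s := by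
          rw [h1, e1, e2, h2]
      _ = (b + s * d) * (star a + star c * s) := by noncomm_ring
  · exact h2
  · calc (star a + star c * s) * c = star a * c + star c * (s * c) := by noncomm_ring
      _ = star c * a + star c * (s * c) := by rw [h3]
      _ = star c * (a + s * c) := by noncomm_ring
  · calc (star b + star d * s) * d = star b * d + star d * (s * d) := by noncomm_ring
      _ = star d * b + star d * (s * d) := by rw [h4]
      _ = star d * (b + s * d) := by noncomm_ring
  · calc (a + s * c) * star d - (b + s * d) * star c
        = (a * star d - b * star c) + s * (c * star d) - s * (d * star c) := by noncomm_ring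
      _ = 1 := by rw [h2, h5]; abel
  · calc (star a + star c * s) * d - star c * (b + s * d)
        = star a * d - star c * b := by noncomm_ring
      _ = 1 := h6

lemma slstar_w {g : Matrix (Fin 2) (Fin 2) A} (hg : g ∈ SLstarSet A) :
    wMat A * g ∈ SLstarSet A := by
  obtain ⟨h1, h2, h3, h4, h5, h6⟩ := hg
  set a := g 0 0 with ha; set b := g 0 1 with hb
  set c := g 1 0 with hc; set d := g 1 1 with hd
  have h3' : star c * a = star a * c := by
    have := congrArg star h3; simpa [star_mul] using this
  have h4' : star d * b = star b * d := by
    have := congrArg star h4; simpa [star_mul] using this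
  have h5' : d * star a - c * star b = 1 := by
    have := congrArg star h5; simpa [star_sub, star_mul] using this
  obtain ⟨m00, m01, m10, m11⟩ := wMat_mul_apply g
  refine ⟨?_, ?_, ?_, ?_, ?_, ?_⟩ <;>
    simp only [m00, m01, m10, m11, ← ha, ← hb, ← hc, ← hd]
  · exact h2
  · calc -a * star (-b) = a * star b := by rw [star_neg]; noncomm_ring
      _ = b * star a := h1
      _ = -b * star (-a) := by rw [star_neg]; noncomm_ring
  · calc star c * -a = -(star c * a) := by noncomm_ring
      _ = -(star a * c) := by rw [h3']
      _ = star (-a) * c := by rw [star_neg]; noncomm_ring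
  · calc star d * -b = -(star d * b) := by noncomm_ring
      _ = -(star b * d) := by rw [h4']
      _ = star (-b) * d := by rw [star_neg]; noncomm_ring
  · calc c * star (-b) - d * star (-a)
        = d * star a - c * star b := by rw [star_neg, star_neg]; noncomm_ring
      _ = 1 := h5'
  · calc star c * -b - star (-a) * d
        = star a * d - star c * b := by rw [star_neg]; noncomm_ring
      _ = 1 := h6

lemma w_two (X : Matrix (Fin 2) (Fin 2) A) : wMat A * (wMat A * X) = -X := by
  obtain ⟨p00, p01, p10, p11⟩ := wMat_mul_apply X
  obtain ⟨q00, q01, q10, q11⟩ := wMat_mul_apply (wMat A * X)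
  ext i j
  fin_cases i <;> fin_cases j <;>
    simp [q00, q01, q10, q11, p00, p01, p10, p11]

lemma w_four (X : Matrix (Fin 2) (Fin 2) A) :
    wMat A * (wMat A * (wMat A * (wMat A * X))) = X := by
  have h1 : wMat A * (wMat A * X) = -X := w_two X
  rw [h1]
  have h2 : wMat A * (wMat A * (-X)) = -(-X) := w_two (-X)
  rw [h2, neg_neg]

lemma u_neg_u (s : A) (X : Matrix (Fin 2) (Fin 2) A) :
    uMat s * (uMat (-s) * X) = X := by
  obtain ⟨p00, p01, p10, p11⟩ := uMat_mul_apply (-s) X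
  obtain ⟨q00, q01, q10, q11⟩ := uMat_mul_apply s (uMat (-s) * X)
  ext i j
  fin_cases i <;> fin_cases j <;>
    simp [q00, q01, q10, q11, p00, p01, p10, p11] <;> noncomm_ring

/-- Base case: `g ∈ SL_*(2,A)` with `g 1 0` a unit is a product of Bruhat generators. -/
lemma base_case {g : Matrix (Fin 2) (Fin 2) A} (hg : g ∈ SLstarSet A)
    (hcu : IsUnit (g 1 0)) : g ∈ Submonoid.closure (bruhatSet A) := by
  obtain ⟨h1, h2, h3, h4, h5, h6⟩ := hg
  obtain ⟨C, hC⟩ := hcu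
  set a := g 0 0 with ha; set b := g 0 1 with hb
  set c := g 1 0 with hcdef; set d := g 1 1 with hd
  set ci : A := ((C⁻¹ : Aˣ) : A) with hci
  have hcc : c * ci = 1 := by rw [← hC, hci]; exact_mod_cast C.mul_inv
  have hcc' : ci * c = 1 := by rw [← hC, hci]; exact_mod_cast C.inv_mul
  have hstci : star c * star ci = 1 := by rw [← star_mul, hcc']; exact star_one A
  have hstci' : star ci * star c = 1 := by rw [← star_mul, hcc]; exact star_one A
  have hkey : star ci * star a = a * ci := by
    calc star ci * star a = star ci * (star a * (c * ci)) := by rw [hcc, mul_one]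
      _ = star ci * ((star a * c) * ci) := by noncomm_ring
      _ = star ci * ((star c * a) * ci) := by rw [h3]
      _ = (star ci * star c) * (a * ci) := by noncomm_ring
      _ = a * ci := by rw [hstci', one_mul]
  have ht : star (a * ci) = a * ci := by rw [star_mul]; exact hkey
  have hsd : star (ci * d) = ci * d := by
    rw [star_mul]
    calc star d * star ci = (ci * c) * (star d * star ci) := by rw [hcc', one_mul]
      _ = ci * ((c * star d) * star ci) := by noncomm_ring
      _ = ci * ((d * star c) * star ci) := by rw [h2]
      _ = (ci * d) * (star c * star ci) := by noncomm_ring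
      _ = ci * d := by rw [hstci, mul_one]
  have hbeq : b = a * ci * d - star ci := by
    have h7 : star c * b = star a * d - 1 := by rw [← h6]; abel
    calc b = (star ci * star c) * b := by rw [hstci', one_mul]
      _ = star ci * (star a * d - 1) := by rw [mul_assoc, h7]
      _ = (star ci * star a) * d - star ci := by noncomm_ring
      _ = (a * ci) * d - star ci := by rw [hkey]
  have hmc : (((star (-C) : Aˣ)) : A) = -(star c) := by rw [← hC]; simp
  have h2E : (((star (-C))⁻¹ : Aˣ) : A) * (-(star c)) = 1 := by
    rw [← hmc]; exact_mod_cast (star (-C)).inv_mul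
  have hEc : (((star (-C))⁻¹ : Aˣ) : A) = -(star ci) := by
    calc (((star (-C))⁻¹ : Aˣ) : A)
        = (((star (-C))⁻¹ : Aˣ) : A) * ((-(star c)) * (-(star ci))) := by
          rw [neg_mul_neg, hstci, mul_one]
      _ = ((((star (-C))⁻¹ : Aˣ) : A) * (-(star c))) * (-(star ci)) := by rw [mul_assoc]
      _ = -(star ci) := by rw [h2E, one_mul]
  have key : g = uMat (a * ci) * (wMat A * (hMat (-C) * uMat (ci * d))) := by
    have hh : hMat (-C) * uMat (ci * d) = !![-c, -c * (ci * d); 0, -(star ci)] := by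
      ext i j
      fin_cases i <;> fin_cases j <;>
        simp [hMat, uMat, Matrix.mul_apply, Fin.sum_univ_two, hEc, hC]
    rw [hh]
    have hw : wMat A * !![-c, -c * (ci * d); 0, -(star ci)]
        = !![0, -(star ci); c, c * (ci * d)] := by
      ext i j
      fin_cases i <;> fin_cases j <;>
        simp [wMat, Matrix.mul_apply, Fin.sum_univ_two]
    rw [hw]
    ext i j
    fin_cases i <;> fin_cases j <;>
      simp [uMat, Matrix.mul_apply, Fin.sum_univ_two, ← ha, ← hb, ← hcdef, ← hd]
    · -- a = a * ci * c
      rw [mul_assoc, hcc', mul_one]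
    · -- b = -(star ci) + a*ci*(c*(ci*d))
      rw [hbeq]
      have : c * (ci * d) = d := by rw [← mul_assoc, hcc, one_mul]
      rw [this]
      noncomm_ring
    · -- d = c * (ci * d)
      rw [← mul_assoc, hcc, one_mul]
  rw [key]
  exact mul_mem (u_mem_closure ht)
    (mul_mem w_mem_closure (mul_mem (h_mem_closure (-C)) (u_mem_closure hsd)))


/-- Main induction: a matrix in `SL_*(2,A)` whose first column admits a euclidean chain of
length `n` is a product of Bruhat generators. -/
lemma chain_case : ∀ n : ℕ, ∀ g : Matrix (Fin 2) (Fin 2) A, g ∈ SLstarSet A →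
    (∃ s r : ℕ → A, r 0 = g 0 0 ∧ r 1 = g 1 0 ∧
      (∀ i < n, star (s i) = s i ∧ r i = s i * r (i + 1) + r (i + 2)) ∧
      IsUnit (r (n + 1))) →
    g ∈ Submonoid.closure (bruhatSet A) := by
  intro n
  induction n with
  | zero =>
    rintro g hg ⟨s, r, _, hr1, _, hu⟩
    exact base_case hg (hr1 ▸ hu)
  | succ n ih =>
    rintro g hg ⟨s, r, hr0, hr1, hch, hu⟩
    have hs0 : star (s 0) = s 0 := (hch 0 (Nat.succ_pos n)).1
    have hrel0 : r 0 = s 0 * r 1 + r 2 := (hch 0 (Nat.succ_pos n)).2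
    set g' := wMat A * (uMat (-(s 0)) * g) with hg'def
    have hg'mem : g' ∈ SLstarSet A :=
      slstar_w (slstar_u (by rw [star_neg, hs0]) hg)
    obtain ⟨p00, _, p10, _⟩ := uMat_mul_apply (-(s 0)) g
    obtain ⟨q00, _, q10, _⟩ := wMat_mul_apply (uMat (-(s 0)) * g)
    have h00 : g' 0 0 = r 1 := by rw [hg'def, q00, p10, hr1]
    have h10 : g' 1 0 = r 2 * (-1 : A) := by
      rw [hg'def, q10, p00, ← hr0, ← hr1, hrel0]
      noncomm_ring
    have hg'cl : g' ∈ Submonoid.closure (bruhatSet A) := by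
      refine ih g' hg'mem ⟨fun i => -(s (i + 1)), fun i => r (i + 1) * (-1 : A) ^ i,
        ?_, ?_, ?_, ?_⟩
      · show r (0 + 1) * (-1 : A) ^ 0 = g' 0 0
        rw [pow_zero, mul_one, h00]
      · show r (1 + 1) * (-1 : A) ^ 1 = g' 1 0
        rw [pow_one, h10]
      · intro i hi
        obtain ⟨hsym, hrel⟩ := hch (i + 1) (by omega)
        refine ⟨by rw [star_neg, hsym], ?_⟩
        show r (i + 1) * (-1 : A) ^ i
            = -(s (i + 1)) * (r (i + 1 + 1) * (-1 : A) ^ (i + 1))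
              + r (i + 1 + 2) * (-1 : A) ^ (i + 2)
        have hp2 : ((-1 : A)) ^ (i + 2) = (-1 : A) ^ i := by
          rw [pow_succ, pow_succ]
          simp [mul_neg, neg_neg]
        rw [hrel, hp2, pow_succ]
        noncomm_ring
      · show IsUnit (r (n + 1 + 1) * (-1 : A) ^ (n + 1))
        exact hu.mul ((isUnit_one.neg).pow (n + 1))
    have hcomb : uMat (s 0) * (wMat A * (wMat A * (wMat A * g'))) = g := by
      rw [hg'def, w_four, u_neg_u]
    rw [← hcomb]
    exact mul_mem (u_mem_closure hs0)
      (mul_mem w_mem_closure (mul_mem w_mem_closure (mul_mem w_mem_closure hg'cl)))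

end BruhatAux

/-- If `(A,*)` is weakly euclidean, then `SL_*(2,A)` is generated by
the Bruhat generators `u(s)` (`s ∈ A_s`), `h(a)` (`a ∈ A^×`) and `w`. -/
theorem SLstar_generated_by_bruhat_of_weaklyEuclidean (A : Type*) [Ring A] [StarRing A]
    (hA : WeaklyEuclidean A) :
    SLstarSet A ⊆ Submonoid.closure
      ({m | ∃ s : A, star s = s ∧ m = uMat s} ∪
       {m | ∃ a : Aˣ, m = hMat a} ∪ {wMat A}) := by
  intro g hg
  obtain ⟨h1, h2, h3, h4, h5, h6⟩ := id hg
  have hco : ∃ x y : A, x * g 0 0 + y * g 1 0 = 1 := by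
    refine ⟨star (g 1 1), -(star (g 0 1)), ?_⟩
    have h6' := congrArg star h6
    simp only [star_sub, star_mul, star_star, star_one] at h6'
    rw [neg_mul, ← sub_eq_add_neg]
    exact h6'
  obtain ⟨n, _, s, r, hr0, hr1, hch, hu⟩ := hA (g 0 0) (g 1 0) h3 hco
  exact chain_case n g hg ⟨s, r, hr0, hr1, hch, hu⟩
end

section
/- Assume 2 is invertible in A. For Lagrangians L, L' of W, the map γ_{L',L} defined by (γ_{L',L} f)(w) = (|L|·|L∩L'|)^{-1/2} Σ_{ζ' ∈ L'} conj(χ(w, ζ')) f(w + ζ') sends 𝓔_L into 𝓔_{L'} and satisfies: (a) ⟨γ_{L',L}(f), h⟩ = ⟨f, γ_{L,L'}(h)⟩ for all f ∈ 𝓔_L, h ∈ 𝓔_{L'}; (b) ⟨γ_{L',L}(f), γ_{L',L}(h)⟩ = ⟨f, h⟩ for all f, h ∈ 𝓔_L; (c) γ_{L,L'} ∘ γ_{L',L} = id_{𝓔_L}; and (e) τ_g ∘ γ_{L',L} = γ_{g·L', g·L} ∘ τ_g for all g ∈ SL_*(2,A), where (τ_g f)(w) = f(g^{-1}·w). -/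
/-- Action of a 2×2 matrix over `A` on `W = S ⊕ S` by matrix multiplication. -/
def matAct {A S : Type*} [Ring A] [AddCommGroup S] [Module A S]
    (g : Matrix (Fin 2) (Fin 2) A) (v : S × S) : S × S :=
  (g 0 0 • v.1 + g 0 1 • v.2, g 1 0 • v.1 + g 1 1 • v.2)

/-- The explicit inverse `[[d*, −b*],[−c*, a*]]` of `g = [[a,b],[c,d]] ∈ SL_*(2,A)`. -/
def invStar {A : Type*} [Ring A] [StarRing A] (g : Matrix (Fin 2) (Fin 2) A) :
    Matrix (Fin 2) (Fin 2) A :=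
  !![star (g 1 1), -star (g 0 1); -star (g 1 0), star (g 0 0)]

/-- The symplectic form `B((s,t),(s',t')) = η(s,t') − η(t,s')` on `W = S ⊕ S`. -/
def symplForm {k S : Type*} [Field k] [AddCommGroup S] [Module k S]
    (η : S →ₗ[k] S →ₗ[k] k) (v w : S × S) : k :=
  η v.1 w.2 - η v.2 w.1

/-- A Lagrangian: a right `A`-submodule `L` of `W = S ⊕ S` (right action
`u·a = (a*·u₁, a*·u₂)`) with `L = L^⊥` for the symplectic form. -/
def IsLagrangian {k A S : Type*} [Field k] [AddCommGroup S] [Module k S]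
    [Ring A] [StarRing A] [Module A S]
    (η : S →ₗ[k] S →ₗ[k] k) (L : Set (S × S)) : Prop :=
  (0 : S × S) ∈ L ∧ (∀ u ∈ L, ∀ v ∈ L, u + v ∈ L) ∧
  (∀ a : A, ∀ u ∈ L, ((star a • u.1, star a • u.2) : S × S) ∈ L) ∧
  L = {w | ∀ u ∈ L, symplForm η u w = 0}

/-- The fiber `𝓔_L = {f : W → ℂ | f(w + ζ) = χ(w,ζ) f(w), ζ ∈ L}`, `χ = ψ ∘ B`. -/
def fiberE {k S : Type*} [Field k] [AddCommGroup S] [Module k S]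
    (η : S →ₗ[k] S →ₗ[k] k) (ψ : AddChar k ℂ) (L : Set (S × S)) : Set ((S × S) → ℂ) :=
  {f | ∀ (w ζ : S × S), ζ ∈ L → f (w + ζ) = ψ (symplForm η w ζ) * f w}

/-- The inner product `⟨f, h⟩ = Σ_{w ∈ W} f(w) conj(h(w))`. -/
noncomputable def innerE {S : Type*} (f h : (S × S) → ℂ) : ℂ :=
  ∑ᶠ w : S × S, f w * (starRingEnd ℂ) (h w)

/-- The connection map `γ_{L',L} : 𝓔_L → 𝓔_{L'}`,
`(γ_{L',L} f)(w) = (|L|·|L∩L'|)^{-1/2} Σ_{ζ' ∈ L'} conj(χ(w,ζ')) f(w + ζ')`. -/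
noncomputable def gammaMap {k S : Type*} [Field k] [AddCommGroup S] [Module k S]
    (η : S →ₗ[k] S →ₗ[k] k) (ψ : AddChar k ℂ) (L' L : Set (S × S))
    (f : (S × S) → ℂ) : (S × S) → ℂ :=
  fun w => ((Real.sqrt ((Nat.card ↥L : ℝ) * (Nat.card ↥(L ∩ L') : ℝ)) : ℂ))⁻¹ *
    ∑ᶠ ζ' ∈ L', (starRingEnd ℂ) (ψ (symplForm η w ζ')) * f (w + ζ')

/-- The operator `τ_g`, `(τ_g f)(w) = f(g⁻¹·w)`. -/
def tauMap {A S : Type*} [AddCommGroup S]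
    [Ring A] [StarRing A] [Module A S]
    (g : Matrix (Fin 2) (Fin 2) A) (f : (S × S) → ℂ) : (S × S) → ℂ :=
  fun w => f (matAct (invStar g) w)

/-!
A Lagrangian `L` is its own orthogonal for the `k`-bilinear form `symplForm η`, hence a
`k`-subspace of half the dimension of `W`, so all Lagrangians have the same cardinality.
Adjointness is the substitution `w ↦ w + ζ'` in the sum defining the inner product.
For `γ_{L,L'} ∘ γ_{L',L}` the double sum collapses through the character sum
`∑_{ζ ∈ L} ψ(B(ζ, -2ζ')) = |L|·[ζ' ∈ L]`, which uses `L = L^⊥` and that `2` is invertible;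
unitarity follows from adjointness and invertibility.
Equivariance holds because `SL_*(2,A)` preserves `symplForm η` and `invStar g` inverts `g`.
-/

open Module ComplexConjugate

section SymplecticForm

variable {k S : Type*} [Field k] [AddCommGroup S] [Module k S] (η : S →ₗ[k] S →ₗ[k] k)

lemma symplForm_add_left (u v w : S × S) :
    symplForm η (u + v) w = symplForm η u w + symplForm η v w := by
  simp only [symplForm, Prod.fst_add, Prod.snd_add, map_add, LinearMap.add_apply]; ring

lemma symplForm_add_right (u v w : S × S) :
    symplForm η u (v + w) = symplForm η u v + symplForm η u w := by
  simp only [symplForm, Prod.fst_add, Prod.snd_add, map_add]; ring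

lemma symplForm_sub_right (u v w : S × S) :
    symplForm η u (v - w) = symplForm η u v - symplForm η u w := by
  simp only [symplForm, Prod.fst_sub, Prod.snd_sub, map_sub]; ring

lemma symplForm_smul_right (c : k) (u w : S × S) :
    symplForm η u (c • w) = c * symplForm η u w := by
  simp only [symplForm, Prod.smul_fst, Prod.smul_snd, map_smul, smul_eq_mul]; ring

lemma symplForm_comm (hsymm : ∀ s t : S, η s t = η t s) (u w : S × S) :
    symplForm η u w = -symplForm η w u := by
  simp only [symplForm, hsymm u.1, hsymm u.2]; ring

def symplBilin : LinearMap.BilinForm k (S × S) :=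
  LinearMap.mk₂ k (symplForm η) (symplForm_add_left η)
    (fun c u w => by simp only [symplForm, Prod.smul_fst, Prod.smul_snd, map_smul,
      LinearMap.smul_apply, smul_eq_mul]; ring)
    (symplForm_add_right η) (fun c u w => symplForm_smul_right η c u w)

@[simp] lemma symplBilin_apply (v w : S × S) : symplBilin η v w = symplForm η v w := rfl

lemma symplBilin_isRefl (hsymm : ∀ s t : S, η s t = η t s) : (symplBilin η).IsRefl := by
  intro v w h
  rw [symplBilin_apply, symplForm_comm η hsymm] at h
  simpa using h

lemma symplBilin_nondegenerate (hsymm : ∀ s t : S, η s t = η t s)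
    (hnondeg : ∀ s : S, (∀ t : S, η s t = 0) → s = 0) : (symplBilin η).Nondegenerate := by
  refine (LinearMap.IsRefl.nondegenerate_iff_separatingLeft (symplBilin_isRefl η hsymm)).mpr ?_
  intro v hv
  exact Prod.ext (hnondeg _ fun t => by simpa [symplForm] using hv (0, t))
    (hnondeg _ fun t => by simpa [symplForm] using hv (t, 0))

lemma IsLagrangian.exists_submodule {A : Type*} [Ring A] [StarRing A] [Module A S]
    {L : Set (S × S)} (hL : IsLagrangian (A := A) η L) :
    ∃ M : Submodule k (S × S), (M : Set (S × S)) = L ∧ (symplBilin η).orthogonal M = M := by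
  have hmem : ∀ w, w ∈ L ↔ ∀ u ∈ L, symplForm η u w = 0 := fun w => Set.ext_iff.mp hL.2.2.2 w
  let M : Submodule k (S × S) :=
    { carrier := L
      add_mem' := fun hu hv => hL.2.1 _ hu _ hv
      zero_mem' := hL.1
      smul_mem' := fun c w hw => (hmem _).mpr fun u hu => by
        rw [symplForm_smul_right, (hmem w).mp hw u hu, mul_zero] }
  refine ⟨M, rfl, ?_⟩
  ext w
  simp only [LinearMap.BilinForm.mem_orthogonal_iff, symplBilin_apply]
  exact (hmem w).symm

end SymplecticForm

section Cardinality

variable {k V : Type*} [Field k] [AddCommGroup V] [Module k V] [FiniteDimensional k V]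
  {B : LinearMap.BilinForm k V}

lemma two_mul_finrank_of_orthogonal_eq_self (hB : B.Nondegenerate) {M : Submodule k V}
    (hM : B.orthogonal M = M) : 2 * finrank k M = finrank k V := by
  have h := LinearMap.BilinForm.finrank_orthogonal hB M
  rw [hM] at h
  have := Submodule.finrank_le M
  omega

lemma natCard_eq_of_orthogonal_eq_self [Finite k] (hB : B.Nondegenerate) {M M' : Submodule k V}
    (hM : B.orthogonal M = M) (hM' : B.orthogonal M' = M') : Nat.card M = Nat.card M' := by
  have h := (two_mul_finrank_of_orthogonal_eq_self hB hM).trans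
    (two_mul_finrank_of_orthogonal_eq_self hB hM').symm
  rw [Module.natCard_eq_pow_finrank (K := k), Module.natCard_eq_pow_finrank (K := k) (V := M')]
  congr 1
  omega

end Cardinality

section CharacterSum

open scoped Classical

lemma AddChar.sum_apply_linearMap {k V : Type*} [Field k] [AddCommGroup V] [Module k V]
    [Fintype V] {ψ : AddChar k ℂ} (hψ : ψ ≠ 1) (φ : V →ₗ[k] k) :
    ∑ v, ψ (φ v) = if φ = 0 then (Fintype.card V : ℂ) else 0 := by
  have hφ : ψ.compAddMonoidHom φ.toAddMonoidHom = 0 ↔ φ = 0 := by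
    refine ⟨fun h => ?_, fun h => by ext; simp [h]⟩
    by_contra hne
    obtain ⟨v, hv⟩ := DFunLike.ne_iff.mp hne
    obtain ⟨x, hx⟩ := AddChar.ne_one_iff.mp hψ
    have : ψ.compAddMonoidHom φ.toAddMonoidHom ((x / φ v) • v) = ψ x := by
      simp [div_mul_cancel₀ x hv]
    rw [h, AddChar.zero_apply] at this
    exact hx this.symm
  simpa [hφ] using AddChar.sum_eq_ite (ψ.compAddMonoidHom φ.toAddMonoidHom)

variable {k S : Type*} [Field k] [AddCommGroup S] [Module k S] [Fintype S]
  {η : S →ₗ[k] S →ₗ[k] k} {M : Submodule k (S × S)}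

lemma sum_addChar_symplForm (hM : (symplBilin η).orthogonal M = M) {ψ : AddChar k ℂ}
    (hψ : ψ ≠ 1) (v : S × S) :
    ∑ z : M, ψ (symplForm η z v) = if v ∈ M then (Nat.card M : ℂ) else 0 := by
  have h := AddChar.sum_apply_linearMap hψ (((symplBilin η).flip v).comp M.subtype)
  have hφ : ((symplBilin η).flip v).comp M.subtype = 0 ↔ v ∈ M := by
    conv_rhs => rw [← hM]
    simp [LinearMap.ext_iff, LinearMap.BilinForm.mem_orthogonal_iff]
  simpa [hφ, Nat.card_eq_fintype_card] using h

end CharacterSum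

noncomputable def gammaScale {W : Type*} (L L' : Set W) : ℝ :=
  (√((Nat.card L : ℝ) * Nat.card ↥(L ∩ L')))⁻¹

lemma gammaScale_comm {W : Type*} {L L' : Set W} (hcard : Nat.card L = Nat.card L') :
    gammaScale L L' = gammaScale L' L := by
  rw [gammaScale, gammaScale, hcard, Set.inter_comm]

lemma gammaScale_mul_gammaScale {W : Type*} {L L' : Set W} (hcard : Nat.card L = Nat.card L') :
    gammaScale L' L * gammaScale L L' = ((Nat.card L : ℝ) * Nat.card ↥(L ∩ L'))⁻¹ := by
  rw [← gammaScale_comm hcard, gammaScale, ← mul_inv, Real.mul_self_sqrt (by positivity)]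

lemma two_ne_zero_or_subsingleton {k A S : Type*} [Field k] [Ring A] [AddCommGroup S]
    [Module k S] [Module A S] (h2 : IsUnit (2 : A)) : (2 : k) ≠ 0 ∨ Subsingleton S := by
  refine or_iff_not_imp_left.mpr fun hk => subsingleton_of_forall_eq 0 fun s => ?_
  have h2s : (2 : A) • s = 0 := by rw [two_smul, ← two_smul k, not_not.mp hk, zero_smul]
  rw [← one_smul A s, ← h2.unit.inv_mul, IsUnit.unit_spec, mul_smul, h2s, smul_zero]

section InnerProduct

variable {S : Type*} [Fintype S]

lemma innerE_eq_sum (f h : S × S → ℂ) : innerE f h = ∑ w, f w * conj (h w) :=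
  finsum_eq_sum_of_fintype _

lemma conj_innerE (f h : S × S → ℂ) : conj (innerE f h) = innerE h f := by
  simp only [innerE_eq_sum, map_sum, map_mul, Complex.conj_conj, mul_comm]

end InnerProduct

section Connection

variable {k S : Type*} [Field k] [AddCommGroup S] [Module k S]
  {η : S →ₗ[k] S →ₗ[k] k} {ψ : AddChar k ℂ} {M M' : Submodule k (S × S)}

lemma conj_mul_apply_add_of_mem_fiberE [Finite k] {L : Set (S × S)} {f : S × S → ℂ}
    (hf : f ∈ fiberE η ψ L) (w : S × S) {z : S × S} (hz : z ∈ L) :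
    conj (ψ (symplForm η w z)) * f (w + z) = f w := by
  rw [hf w z hz, ← mul_assoc, ← AddChar.map_neg_eq_conj, ← AddChar.map_add_eq_mul,
    neg_add_cancel, AddChar.map_zero_eq_one, one_mul]

lemma neg_two_smul_mem_iff (h2 : (2 : k) ≠ 0 ∨ Subsingleton S) {v : S × S} :
    (-2 : k) • v ∈ M ↔ v ∈ M := by
  rcases h2 with h2 | hS
  · exact Submodule.smul_mem_iff M (neg_ne_zero.mpr h2)
  · rw [Subsingleton.elim v 0, smul_zero]

lemma conj_mul_conj_mul_apply_add_add [Finite k] (hsymm : ∀ s t : S, η s t = η t s)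
    {f : S × S → ℂ} (hf : f ∈ fiberE η ψ M) (w : S × S) {z : S × S} (hz : z ∈ M) (z' : S × S) :
    conj (ψ (symplForm η w z)) * (conj (ψ (symplForm η (w + z) z')) * f (w + z + z')) =
      ψ (symplForm η z ((-2 : k) • z')) * (conj (ψ (symplForm η w z')) * f (w + z')) := by
  rw [add_right_comm, hf _ z hz, symplForm_add_left, symplForm_add_left,
    symplForm_comm η hsymm z' z, symplForm_smul_right]
  simp only [← AddChar.map_neg_eq_conj]
  have hchar : ψ (-symplForm η w z) * ψ (-(symplForm η w z' + symplForm η z z')) *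
      ψ (symplForm η w z + -symplForm η z z') =
      ψ (-2 * symplForm η z z') * ψ (-symplForm η w z') := by
    simp only [← AddChar.map_add_eq_mul]; ring_nf
  linear_combination f (w + z') * hchar

open scoped Classical

variable [Fintype S]

lemma gammaMap_apply (L : Set (S × S)) (f : S × S → ℂ) (w : S × S) :
    gammaMap η ψ M' L f w =
      gammaScale L M' * ∑ z : M', conj (ψ (symplForm η w z)) * f (w + z) := by
  rw [gammaMap, gammaScale, ← finsum_set_coe_eq_finsum_mem, finsum_eq_sum_of_fintype,
    Complex.ofReal_inv]
  rfl

lemma gammaMap_mem_fiberE [Finite k] (L : Set (S × S))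
    (hM' : M' ≤ (symplBilin η).orthogonal M') (f : S × S → ℂ) :
    gammaMap η ψ M' L f ∈ fiberE η ψ M' := by
  intro w ζ hζ
  have hζζ : symplForm η ζ ζ = 0 := hM' hζ ζ hζ
  rw [gammaMap_apply, gammaMap_apply, ← (Equiv.subRight ⟨ζ, hζ⟩).sum_comp, Finset.mul_sum,
    Finset.mul_sum, Finset.mul_sum]
  refine Finset.sum_congr rfl fun z _ => ?_
  have hzζ : symplForm η ζ z = 0 := hM' z.2 ζ hζ
  have hB : symplForm η (w + ζ) (z - ζ) = symplForm η w z - symplForm η w ζ := by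
    rw [symplForm_add_left, symplForm_sub_right, symplForm_sub_right, hζζ, hzζ]; ring
  have hchar : ψ (-(symplForm η w z - symplForm η w ζ)) =
      ψ (symplForm η w ζ) * ψ (-symplForm η w z) := by
    rw [← AddChar.map_add_eq_mul]; ring_nf
  simp only [Equiv.subRight_apply, Submodule.coe_sub, hB, add_add_sub_cancel,
    ← AddChar.map_neg_eq_conj, hchar]
  ring

lemma innerE_gammaMap_left (L : Set (S × S)) (f : S × S → ℂ) {h : S × S → ℂ}
    (hh : h ∈ fiberE η ψ M') :
    innerE (gammaMap η ψ M' L f) h = gammaScale L M' * Nat.card M' * innerE f h := by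
  calc innerE (gammaMap η ψ M' L f) h
      = gammaScale L M' * ∑ z : M', ∑ w, f (w + z) * conj (h (w + z)) := by
        simp only [innerE_eq_sum, gammaMap_apply, mul_assoc, Finset.sum_mul, ← Finset.mul_sum]
        rw [Finset.sum_comm]
        refine congrArg _ (Finset.sum_congr rfl fun z _ => Finset.sum_congr rfl fun w _ => ?_)
        rw [hh w z z.2, map_mul]
        ring
    _ = gammaScale L M' * Nat.card M' * innerE f h := by
        have htrans (z : S × S) : ∑ w, f (w + z) * conj (h (w + z)) = innerE f h := by
          rw [innerE_eq_sum]; exact Equiv.sum_comp (Equiv.addRight z) (fun w => f w * conj (h w))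
        simp only [htrans, Finset.sum_const, Finset.card_univ, nsmul_eq_mul,
          Nat.card_eq_fintype_card]
        ring

lemma innerE_gammaMap_right (L' : Set (S × S)) {f : S × S → ℂ} (hf : f ∈ fiberE η ψ M)
    (h : S × S → ℂ) :
    innerE f (gammaMap η ψ M L' h) = gammaScale L' M * Nat.card M * innerE f h := by
  rw [← conj_innerE, innerE_gammaMap_left L' h hf, map_mul, map_mul, conj_innerE,
    Complex.conj_ofReal, Complex.conj_natCast]

lemma innerE_gammaMap (hcard : Nat.card M = Nat.card M') {f h : S × S → ℂ}
    (hf : f ∈ fiberE η ψ M) (hh : h ∈ fiberE η ψ M') :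
    innerE (gammaMap η ψ M' M f) h = innerE f (gammaMap η ψ M M' h) := by
  rw [innerE_gammaMap_left _ f hh, innerE_gammaMap_right _ hf, gammaScale_comm hcard, hcard]

lemma sum_ite_mem_eq_card_inter_mul (a : ℂ) :
    ∑ z : M', (if (z : S × S) ∈ M then a else 0) = Nat.card ↥((M : Set (S × S)) ∩ M') * a := by
  rw [Finset.sum_ite, Finset.sum_const_zero, add_zero, Finset.sum_const, nsmul_eq_mul,
    ← Fintype.card_subtype, ← Nat.card_eq_fintype_card, Set.inter_comm,
    Nat.card_congr (Equiv.subtypeSubtypeEquivSubtypeInter (· ∈ M') (· ∈ M))]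
  rfl

lemma gammaMap_gammaMap [Finite k] (hsymm : ∀ s t : S, η s t = η t s)
    (hM : (symplBilin η).orthogonal M = M) (hψ : ψ ≠ 1) (h2 : (2 : k) ≠ 0 ∨ Subsingleton S)
    (hcard : Nat.card M = Nat.card M') {f : S × S → ℂ} (hf : f ∈ fiberE η ψ M) :
    gammaMap η ψ M M' (gammaMap η ψ M' M f) = f := by
  funext w
  have hM0 : (Nat.card M : ℂ) ≠ 0 := Nat.cast_ne_zero.mpr Nat.card_pos.ne'
  have hI0 : (Nat.card ↥((M : Set (S × S)) ∩ M') : ℂ) ≠ 0 := by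
    have : Nonempty ↥((M : Set (S × S)) ∩ M') := ⟨⟨0, M.zero_mem, M'.zero_mem⟩⟩
    exact Nat.cast_ne_zero.mpr Nat.card_pos.ne'
  calc gammaMap η ψ M M' (gammaMap η ψ M' M f) w
      = (gammaScale (M' : Set (S × S)) M * gammaScale (M : Set (S × S)) M' : ℝ) *
          ∑ z' : M', (∑ z : M, ψ (symplForm η z ((-2 : k) • z'))) *
            (conj (ψ (symplForm η w z')) * f (w + z')) := by
        simp only [gammaMap_apply, Finset.mul_sum, Finset.sum_mul, Complex.ofReal_mul]
        rw [Finset.sum_comm]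
        refine Finset.sum_congr rfl fun z' _ => Finset.sum_congr rfl fun z _ => ?_
        rw [← conj_mul_conj_mul_apply_add_add hsymm hf w z.2]
        ring
    _ = (gammaScale (M' : Set (S × S)) M * gammaScale (M : Set (S × S)) M' : ℝ) *
          ∑ z' : M', if (z' : S × S) ∈ M then (Nat.card M : ℂ) * f w else 0 := by
        refine congrArg _ (Finset.sum_congr rfl fun z' _ => ?_)
        rw [sum_addChar_symplForm hM hψ, neg_two_smul_mem_iff h2]
        split_ifs with hz'
        · rw [conj_mul_apply_add_of_mem_fiberE hf w hz']
        · rw [zero_mul]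
    _ = f w := by
        rw [sum_ite_mem_eq_card_inter_mul, gammaScale_mul_gammaScale hcard]
        push_cast
        field_simp

end Connection

section Equivariance

variable {A S : Type*} [Ring A] [AddCommGroup S] [Module A S]

lemma matAct_matAct (M N : Matrix (Fin 2) (Fin 2) A) (v : S × S) :
    matAct M (matAct N v) = matAct (M * N) v := by
  simp only [matAct, Matrix.mul_apply, Fin.sum_univ_two, smul_add, add_smul, mul_smul]
  refine Prod.ext ?_ ?_ <;> simp only <;> abel

lemma matAct_one (v : S × S) : matAct (1 : Matrix (Fin 2) (Fin 2) A) v = v := by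
  simp [matAct]

lemma matAct_add (g : Matrix (Fin 2) (Fin 2) A) (v w : S × S) :
    matAct g (v + w) = matAct g v + matAct g w := by
  simp only [matAct, Prod.fst_add, Prod.snd_add, smul_add, Prod.mk_add_mk]
  refine Prod.ext ?_ ?_ <;> simp only <;> abel

variable [StarRing A] {g : Matrix (Fin 2) (Fin 2) A}

lemma invStar_mul_self (hg : g ∈ SLstarSet A) : invStar g * g = 1 := by
  obtain ⟨-, -, h3, h4, -, h6⟩ := hg
  have h6' : star (g 1 1) * g 0 0 - star (g 0 1) * g 1 0 = 1 := by
    simpa [star_sub, star_mul] using congrArg star h6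
  ext i j
  fin_cases i <;> fin_cases j <;>
    simp [invStar, Matrix.mul_apply, Fin.sum_univ_two, neg_mul, ← sub_eq_add_neg,
      neg_add_eq_sub, h3, h4, h6, h6']

lemma mul_invStar_self (hg : g ∈ SLstarSet A) : g * invStar g = 1 := by
  obtain ⟨h1, h2, -, -, h5, -⟩ := hg
  have h5' : g 1 1 * star (g 0 0) - g 1 0 * star (g 0 1) = 1 := by
    simpa [star_sub, star_mul] using congrArg star h5
  ext i j
  fin_cases i <;> fin_cases j <;>
    simp [invStar, Matrix.mul_apply, Fin.sum_univ_two, mul_neg, ← sub_eq_add_neg,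
      neg_add_eq_sub, h1, h2, h5, h5']

lemma matAct_invStar_matAct (hg : g ∈ SLstarSet A) (v : S × S) :
    matAct (invStar g) (matAct g v) = v := by
  rw [matAct_matAct, invStar_mul_self hg, matAct_one]

lemma matAct_matAct_invStar (hg : g ∈ SLstarSet A) (v : S × S) :
    matAct g (matAct (invStar g) v) = v := by
  rw [matAct_matAct, mul_invStar_self hg, matAct_one]

variable {k : Type*} [Field k] [Module k S] {η : S →ₗ[k] S →ₗ[k] k}

lemma symplForm_matAct (hbalanced : ∀ (a : A) (s t : S), η (star a • s) t = η s (a • t))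
    (hg : g ∈ SLstarSet A) (v w : S × S) :
    symplForm η (matAct g v) (matAct g w) = symplForm η v w := by
  obtain ⟨-, -, h3, h4, -, h6⟩ := hg
  have h6' : star (g 1 1) * g 0 0 - star (g 0 1) * g 1 0 = 1 := by
    simpa [star_sub, star_mul] using congrArg star h6
  have hmove (p q : A) (s t : S) : η (p • s) (q • t) = η s ((star p * q) • t) := by
    rw [← star_star p, hbalanced, star_star, smul_smul]
  simp only [symplForm, matAct, map_add, LinearMap.add_apply, hmove]
  rw [h3, h4, sub_eq_iff_eq_add.mp h6, sub_eq_iff_eq_add.mp h6', add_smul, add_smul, one_smul,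
    one_smul, map_add, map_add]
  ring

lemma tauMap_gammaMap (ψ : AddChar k ℂ)
    (hbalanced : ∀ (a : A) (s t : S), η (star a • s) t = η s (a • t))
    (L L' : Set (S × S)) (hg : g ∈ SLstarSet A) (f : S × S → ℂ) :
    tauMap g (gammaMap η ψ L' L f)
      = gammaMap η ψ (matAct g '' L') (matAct g '' L) (tauMap g f) := by
  funext w
  have hinj : Function.Injective (matAct (S := S) g) :=
    Function.LeftInverse.injective (matAct_invStar_matAct hg)
  simp only [tauMap, gammaMap, ← Set.image_inter hinj, Nat.card_image_of_injective hinj,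
    finsum_mem_image hinj.injOn, matAct_add, matAct_invStar_matAct hg]
  congr 1
  refine finsum_mem_congr rfl fun ζ' _ => ?_
  rw [← symplForm_matAct hbalanced hg (matAct (invStar g) w), matAct_matAct_invStar hg]

end Equivariance

theorem gammaMap_connection_properties_general
    {k A S : Type*} [Field k] [Fintype k] [Ring A] [StarRing A]
    (h2 : IsUnit (2 : A))
    [AddCommGroup S] [Module k S] [Module A S]
    [FiniteDimensional k S]
    (η : S →ₗ[k] S →ₗ[k] k)
    (hsymm : ∀ s t : S, η s t = η t s)
    (hnondeg : ∀ s : S, (∀ t : S, η s t = 0) → s = 0)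
    (hbalanced : ∀ (a : A) (s t : S), η (star a • s) t = η s (a • t))
    (ψ : AddChar k ℂ) (hψ : ∃ x : k, ψ x ≠ 1)
    (L L' : Set (S × S)) (hL : IsLagrangian (A := A) η L) (hL' : IsLagrangian (A := A) η L') :
    (∀ f ∈ fiberE η ψ L, gammaMap η ψ L' L f ∈ fiberE η ψ L') ∧
    (∀ f ∈ fiberE η ψ L, ∀ h ∈ fiberE η ψ L',
      innerE (gammaMap η ψ L' L f) h = innerE f (gammaMap η ψ L L' h)) ∧
    (∀ f ∈ fiberE η ψ L, ∀ h ∈ fiberE η ψ L,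
      innerE (gammaMap η ψ L' L f) (gammaMap η ψ L' L h) = innerE f h) ∧
    (∀ f ∈ fiberE η ψ L, gammaMap η ψ L L' (gammaMap η ψ L' L f) = f) ∧
    (∀ g ∈ SLstarSet A, ∀ f ∈ fiberE η ψ L,
      tauMap g (gammaMap η ψ L' L f)
        = gammaMap η ψ (matAct g '' L') (matAct g '' L) (tauMap g f)) := by
  have : Finite S := Module.finite_of_finite k
  cases nonempty_fintype S
  obtain ⟨M, rfl, hM⟩ := hL.exists_submodule
  obtain ⟨M', rfl, hM'⟩ := hL'.exists_submodule
  have hcard : Nat.card M = Nat.card M' :=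
    natCard_eq_of_orthogonal_eq_self (symplBilin_nondegenerate η hsymm hnondeg) hM hM'
  have hψ1 : ψ ≠ 1 := AddChar.ne_one_iff.mpr hψ
  have hinv {f} (hf : f ∈ fiberE η ψ M) : gammaMap η ψ M M' (gammaMap η ψ M' M f) = f :=
    gammaMap_gammaMap hsymm hM hψ1 (two_ne_zero_or_subsingleton h2) hcard hf
  have hmem (f) : gammaMap η ψ M' M f ∈ fiberE η ψ M' := gammaMap_mem_fiberE _ hM'.ge f
  refine ⟨fun f _ => hmem f, fun f hf h hh => innerE_gammaMap hcard hf hh,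
    fun f hf h hh => ?_, fun f hf => hinv hf, fun g hg f _ => tauMap_gammaMap ψ hbalanced _ _ hg f⟩
  rw [innerE_gammaMap hcard hf (hmem h), hinv hh]

/-- Properties of the connection maps `γ_{L',L}` on the Lagrangian
bundle: they map `𝓔_L` to `𝓔_{L'}`, are mutually adjoint, unitary, mutually inverse,
and `G`-equivariant. -/
theorem gammaMap_connection_properties
    {k A S : Type*} [Field k] [Fintype k] [Ring A] [Algebra k A] [StarRing A] [Finite A]
    (hstark : ∀ c : k, star (algebraMap k A c) = algebraMap k A c)
    (h2 : IsUnit (2 : A))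
    [AddCommGroup S] [Module k S] [Module A S] [IsScalarTower k A S]
    [FiniteDimensional k S]
    (η : S →ₗ[k] S →ₗ[k] k)
    (hsymm : ∀ s t : S, η s t = η t s)
    (hnondeg : ∀ s : S, (∀ t : S, η s t = 0) → s = 0)
    (hbalanced : ∀ (a : A) (s t : S), η (star a • s) t = η s (a • t))
    (ψ : AddChar k ℂ) (hψ : ∃ x : k, ψ x ≠ 1)
    (L L' : Set (S × S)) (hL : IsLagrangian (A := A) η L) (hL' : IsLagrangian (A := A) η L') :
    (∀ f ∈ fiberE η ψ L, gammaMap η ψ L' L f ∈ fiberE η ψ L') ∧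
    (∀ f ∈ fiberE η ψ L, ∀ h ∈ fiberE η ψ L',
      innerE (gammaMap η ψ L' L f) h = innerE f (gammaMap η ψ L L' h)) ∧
    (∀ f ∈ fiberE η ψ L, ∀ h ∈ fiberE η ψ L,
      innerE (gammaMap η ψ L' L f) (gammaMap η ψ L' L h) = innerE f h) ∧
    (∀ f ∈ fiberE η ψ L, gammaMap η ψ L L' (gammaMap η ψ L' L f) = f) ∧
    (∀ g ∈ SLstarSet A, ∀ f ∈ fiberE η ψ L,
      tauMap g (gammaMap η ψ L' L f)
        = gammaMap η ψ (matAct g '' L') (matAct g '' L) (tauMap g f)) :=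
  gammaMap_connection_properties_general h2 η hsymm hnondeg hbalanced ψ hψ L L' hL hL'
end
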